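/- Let R, θ ∈ C²([−1,1]) satisfy R'' − R|θ'|² + R − R³ = 0 and R²θ'(x) = A∫_{−1}^x V R² with A > 0 and V odd, nondecreasing, not a.e. zero, R even, R ≥ 0, R' ≤ 0 on (−1,0), R' ≥ 0 on (0,1), R'(±1) = θ'(±1) = 0. If R(x₀) = 0 and R'(x₀) = 0 at some x₀ ∈ [−1,1], then R ≡ 0 on [−1,1]. -/

import Mathlib

/-!
Since `R` and `θ'` are continuous, `R` solves the linear equation `R'' = c R` with the bounded
coefficient `c = θ'² - 1 + R²`. The phase vector `Y = (R, R')` then satisfies `‖Y'‖ ≤ K ‖Y‖`, and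
Grönwall's inequality, run forwards from `x₀` and backwards after the reflection `x ↦ -x`,
forces `Y = 0` on the whole interval since `Y(x₀) = 0`.
-/

open MeasureTheory Set

theorem eq_zero_of_norm_deriv_le_mul_norm_of_eq_zero {E : Type*} [NormedAddCommGroup E]
    [NormedSpace ℝ E] {f f' : ℝ → E} {K a b x₀ : ℝ}
    (hf : ∀ x ∈ Icc a b, HasDerivAt f (f' x) x)
    (bound : ∀ x ∈ Icc a b, ‖f' x‖ ≤ K * ‖f x‖)
    (hx₀ : x₀ ∈ Icc a b) (h₀ : f x₀ = 0) :
    ∀ x ∈ Icc a b, f x = 0 := by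
  have hcont : ContinuousOn f (Icc a b) := fun x hx ↦ (hf x hx).continuousAt.continuousWithinAt
  have right : ∀ x ∈ Icc x₀ b, f x = 0 :=
    eq_zero_of_abs_deriv_le_mul_abs_self_of_eq_zero_right
      (hcont.mono (Icc_subset_Icc_left hx₀.1))
      (fun x hx ↦ (hf x ⟨hx₀.1.trans hx.1, hx.2.le⟩).hasDerivWithinAt) h₀
      (fun x hx ↦ bound x ⟨hx₀.1.trans hx.1, hx.2.le⟩)
  have hneg : ∀ y ∈ Icc (-x₀) (-a), -y ∈ Icc a b := fun y hy ↦
    ⟨le_neg.mp hy.2, (neg_le.mp hy.1).trans hx₀.2⟩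
  have hf_neg : ∀ y ∈ Icc (-x₀) (-a), HasDerivAt (fun y ↦ f (-y)) (-f' (-y)) y := fun y hy ↦ by
    simpa [Function.comp_def] using (hf _ (hneg y hy)).scomp y (hasDerivAt_neg y)
  have left : ∀ y ∈ Icc (-x₀) (-a), f (-y) = 0 :=
    eq_zero_of_abs_deriv_le_mul_abs_self_of_eq_zero_right
      (fun y hy ↦ (hf_neg y hy).continuousAt.continuousWithinAt)
      (fun y hy ↦ (hf_neg y (Ico_subset_Icc_self hy)).hasDerivWithinAt) (by simpa using h₀)
      (fun y hy ↦ by simpa using bound _ (hneg y (Ico_subset_Icc_self hy)))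
  intro x hx
  rcases le_total x₀ x with h | h
  · exact right x ⟨h, hx.2⟩
  · simpa using left (-x) ⟨neg_le_neg h, neg_le_neg hx.1⟩

theorem eq_zero_of_deriv_deriv_eq_mul_of_eq_zero {R c : ℝ → ℝ} {a b x₀ : ℝ}
    (hR : ContDiff ℝ 2 R) (hc : ContinuousOn c (Icc a b))
    (hRc : ∀ x ∈ Icc a b, deriv (deriv R) x = c x * R x)
    (hx₀ : x₀ ∈ Icc a b) (h₀ : R x₀ = 0) (h₀' : deriv R x₀ = 0) :
    ∀ x ∈ Icc a b, R x = 0 := by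
  obtain ⟨M, hM⟩ := isCompact_Icc.exists_bound_of_continuousOn hc
  have hR' : ContDiff ℝ 1 (deriv R) := hR.iterate_deriv' 1 1
  have hderiv : ∀ x, HasDerivAt (fun x ↦ (R x, deriv R x)) (deriv R x, deriv (deriv R) x) x :=
    fun x ↦ ((hR.differentiable two_ne_zero x).hasDerivAt).prodMk
      ((hR'.differentiable one_ne_zero x).hasDerivAt)
  have bound : ∀ x ∈ Icc a b,
      ‖(deriv R x, deriv (deriv R) x)‖ ≤ (1 + |M|) * ‖(R x, deriv R x)‖ := by
    intro x hx
    have hcx : ‖c x‖ ≤ |M| := (hM x hx).trans (le_abs_self M)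
    have hRx : ‖R x‖ ≤ ‖(R x, deriv R x)‖ := norm_fst_le (R x, deriv R x)
    have hR'x : ‖deriv R x‖ ≤ ‖(R x, deriv R x)‖ := norm_snd_le (R x, deriv R x)
    refine norm_prod_le_iff.mpr ⟨?_, ?_⟩
    · nlinarith [abs_nonneg M, norm_nonneg (deriv R x)]
    · rw [hRc x hx, norm_mul]
      nlinarith [norm_nonneg (c x), norm_nonneg (R x), abs_nonneg M]
  intro x hx
  have hY := eq_zero_of_norm_deriv_le_mul_norm_of_eq_zero (fun x _ ↦ hderiv x) bound hx₀
    (by simp [h₀, h₀']) x hx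
  exact congrArg Prod.fst hY

theorem vanishing_by_ode_uniqueness_general
    (R θ : ℝ → ℝ)
    (hR : ContDiff ℝ 2 R) (hθ : ContDiff ℝ 2 θ)
    (heqR : ∀ x ∈ Set.Icc (-1 : ℝ) 1,
      deriv (deriv R) x - R x * (deriv θ x) ^ 2 + R x - (R x) ^ 3 = 0)
    (x₀ : ℝ) (hx₀ : x₀ ∈ Set.Icc (-1 : ℝ) 1)
    (hR0 : R x₀ = 0) (hR'0 : deriv R x₀ = 0) :
    ∀ x ∈ Set.Icc (-1 : ℝ) 1, R x = 0 := by
  have hcoeff : Continuous fun x ↦ deriv θ x ^ 2 - 1 + R x ^ 2 := by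
    have := hθ.continuous_deriv one_le_two
    have := hR.continuous
    fun_prop
  refine eq_zero_of_deriv_deriv_eq_mul_of_eq_zero hR hcoeff.continuousOn (fun x hx ↦ ?_) hx₀
    hR0 hR'0
  linear_combination heqR x hx

/-- If the modulus `R` of a symmetric steady state (satisfying
`R'' - R|θ'|² + R - R³ = 0` and `R²θ' = A∫_{-1}^{x} V R²`) vanishes together
with its derivative at some point `x₀ ∈ [-1,1]`, then `R ≡ 0` on `[-1,1]`
(ODE uniqueness). -/
theorem vanishing_by_ode_uniqueness
    (A : ℝ) (hA : 0 < A) (V R θ : ℝ → ℝ)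
    (hVmeas : Measurable V)
    (hVbd : ∃ M, ∀ x ∈ Set.Icc (-1 : ℝ) 1, |V x| ≤ M)
    (hVodd : ∀ x ∈ Set.Icc (-1 : ℝ) 1, V (-x) = -V x)
    (hVmono : ∀ x₁ ∈ Set.Icc (-1 : ℝ) 1, ∀ x₂ ∈ Set.Icc (-1 : ℝ) 1,
      x₁ < x₂ → V x₁ ≤ V x₂)
    (hVne : ¬ (∀ᵐ x ∂(volume.restrict (Set.Icc (-1 : ℝ) 1)), V x = 0))
    (hR : ContDiff ℝ 2 R) (hθ : ContDiff ℝ 2 θ)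
    (hRnonneg : ∀ x ∈ Set.Icc (-1 : ℝ) 1, 0 ≤ R x)
    (hReven : ∀ x ∈ Set.Icc (-1 : ℝ) 1, R (-x) = R x)
    (hRdec : ∀ x ∈ Set.Ioo (-1 : ℝ) 0, deriv R x ≤ 0)
    (hRinc : ∀ x ∈ Set.Ioo (0 : ℝ) 1, 0 ≤ deriv R x)
    (hbcR : deriv R (-1) = 0 ∧ deriv R 1 = 0)
    (hbcθ : deriv θ (-1) = 0 ∧ deriv θ 1 = 0)
    (heqR : ∀ x ∈ Set.Icc (-1 : ℝ) 1,
      deriv (deriv R) x - R x * (deriv θ x) ^ 2 + R x - (R x) ^ 3 = 0)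
    (heqθ : ∀ x ∈ Set.Icc (-1 : ℝ) 1,
      (R x) ^ 2 * deriv θ x = A * ∫ s in (-1 : ℝ)..x, V s * (R s) ^ 2)
    (x₀ : ℝ) (hx₀ : x₀ ∈ Set.Icc (-1 : ℝ) 1)
    (hR0 : R x₀ = 0) (hR'0 : deriv R x₀ = 0) :
    ∀ x ∈ Set.Icc (-1 : ℝ) 1, R x = 0 :=
  vanishing_by_ode_uniqueness_general R θ hR hθ heqR x₀ hx₀ hR0 hR'0
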